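/- There is a universal constant C > 0 such that for every Boolean function f : {0,1}^n × {0,1}^n → {0,1} and every δ ∈ (0,1): log srec_{δ,δ}(f) ≤ C · log(1/δ) · log prt_{1/8}(f). -/

import Mathlib

open scoped BigOperators
open scoped Classical

noncomputable section

/-! ## Probability distributions on finite types -/

/-- `p` is a probability distribution on the finite type `α`. -/
def IsDist {α : Type} [Fintype α] (p : α → ℝ) : Prop :=
  (∀ a, 0 ≤ p a) ∧ ∑ a, p a = 1

/-- `μ` (in curried form) is a probability distribution on `X × Y`. -/
def IsDist2 {X Y : Type} [Fintype X] [Fintype Y] (μ : X → Y → ℝ) : Prop :=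
  (∀ x y, 0 ≤ μ x y) ∧ ∑ x, ∑ y, μ x y = 1

/-! ## Deterministic communication protocols -/

/-- A deterministic two-party communication protocol: a finite binary tree where each
internal node is owned by Alice (`nodeA`) or Bob (`nodeB`) and is labeled by a function
of that player's input choosing one of the two children; leaves carry Boolean outputs. -/
inductive Protocol (X Y : Type) : Type
  | leaf : Bool → Protocol X Y
  | nodeA : (X → Bool) → Protocol X Y → Protocol X Y → Protocol X Y
  | nodeB : (Y → Bool) → Protocol X Y → Protocol X Y → Protocol X Y

namespace Protocol

def eval {X Y : Type} : Protocol X Y → X → Y → Bool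
  | leaf b, _, _ => b
  | nodeA g t0 t1, x, y => if g x then eval t1 x y else eval t0 x y
  | nodeB g t0 t1, x, y => if g y then eval t1 x y else eval t0 x y

/-- Depth (number of bits communicated in the worst case). -/
def depth {X Y : Type} : Protocol X Y → ℕ
  | leaf _ => 0
  | nodeA _ t0 t1 => max (depth t0) (depth t1) + 1
  | nodeB _ t0 t1 => max (depth t0) (depth t1) + 1

/-- Number of leaves. -/
def leavesCount {X Y : Type} : Protocol X Y → ℕ
  | leaf _ => 1
  | nodeA _ t0 t1 => leavesCount t0 + leavesCount t1
  | nodeB _ t0 t1 => leavesCount t0 + leavesCount t1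

/-- The sequence of bits communicated on input `(x, y)`. -/
def transcript {X Y : Type} : Protocol X Y → X → Y → List Bool
  | leaf _, _, _ => []
  | nodeA g t0 t1, x, y =>
      if g x then true :: transcript t1 x y else false :: transcript t0 x y
  | nodeB g t0 t1, x, y =>
      if g y then true :: transcript t1 x y else false :: transcript t0 x y

end Protocol

/-- Error of a deterministic protocol w.r.t. input distribution `μ`. -/
def commErr {X Y : Type} [Fintype X] [Fintype Y]
    (μ : X → Y → ℝ) (f : X → Y → Bool) (P : Protocol X Y) : ℝ :=
  ∑ x, ∑ y, if P.eval x y ≠ f x y then μ x y else 0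

/-- Distributional communication complexity `CC^μ_ε(f)`: the minimum depth of a
deterministic protocol erring with probability at most `ε` under `μ`. -/
def CCdist {X Y : Type} [Fintype X] [Fintype Y]
    (μ : X → Y → ℝ) (f : X → Y → Bool) (ε : ℝ) : ℕ :=
  sInf {d : ℕ | ∃ P : Protocol X Y, P.depth ≤ d ∧ commErr μ f P ≤ ε}

/-- The advantage `adv_μ(Π)` of a protocol w.r.t. a (not necessarily normalized) measure. -/
def protAdv {X Y : Type} [Fintype X] [Fintype Y]
    (μ : X → Y → ℝ) (f : X → Y → Bool) (P : Protocol X Y) : ℝ :=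
  ∑ x, ∑ y, if P.eval x y = f x y then μ x y else - μ x y

/-! ## Information complexity -/

/-- Probability of an event under a finite (possibly unnormalized) distribution. -/
def prOf {Ω : Type} [Fintype Ω] (p : Ω → ℝ) (q : Ω → Prop) : ℝ :=
  ∑ ω, if q ω then p ω else 0

/-- Conditional mutual information `I(A ; B | C)` (in bits) of random variables `A`, `B`, `C`
defined on a finite probability space `(Ω, p)`. -/
def condMI {Ω α β γ : Type} [Fintype Ω] (p : Ω → ℝ)
    (A : Ω → α) (B : Ω → β) (C : Ω → γ) : ℝ :=
  ∑ ω, p ω * Real.logb 2 (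
    (prOf p (fun ω' => A ω' = A ω ∧ B ω' = B ω ∧ C ω' = C ω) *
      prOf p (fun ω' => C ω' = C ω)) /
    (prOf p (fun ω' => A ω' = A ω ∧ C ω' = C ω) *
      prOf p (fun ω' => B ω' = B ω ∧ C ω' = C ω)))

/-- Internal information cost `IC^μ(Π) = I(X;T|Y) + I(Y;T|X)` of the public-coin protocol
given by a distribution `ρ` on `Fin m` together with deterministic protocols `P r`; the
transcript `T` consists of the public randomness together with the communicated bits. -/
def infoCost {X Y : Type} [Fintype X] [Fintype Y] (μ : X → Y → ℝ)
    {m : ℕ} (ρ : Fin m → ℝ) (P : Fin m → Protocol X Y) : ℝ :=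
  condMI (fun ω : X × Y × Fin m => μ ω.1 ω.2.1 * ρ ω.2.2)
      (fun ω => ω.1)
      (fun ω => (ω.2.2, (P ω.2.2).transcript ω.1 ω.2.1))
      (fun ω => ω.2.1)
  + condMI (fun ω : X × Y × Fin m => μ ω.1 ω.2.1 * ρ ω.2.2)
      (fun ω => ω.2.1)
      (fun ω => (ω.2.2, (P ω.2.2).transcript ω.1 ω.2.1))
      (fun ω => ω.1)

/-- Error of a public-coin protocol under input distribution `μ` and coin distribution `ρ`. -/
def randErr {X Y : Type} [Fintype X] [Fintype Y] (μ : X → Y → ℝ) (f : X → Y → Bool)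
    {m : ℕ} (ρ : Fin m → ℝ) (P : Fin m → Protocol X Y) : ℝ :=
  ∑ x, ∑ y, ∑ r, if (P r).eval x y ≠ f x y then μ x y * ρ r else 0

/-- `IC^μ_ε(f)`: infimum of the information cost over all public-coin protocols computing
`f` with error at most `ε` under `μ`. -/
def ICmu {X Y : Type} [Fintype X] [Fintype Y]
    (μ : X → Y → ℝ) (f : X → Y → Bool) (ε : ℝ) : ℝ :=
  sInf { c : ℝ | ∃ (m : ℕ) (ρ : Fin m → ℝ) (P : Fin m → Protocol X Y),
    IsDist ρ ∧ randErr μ f ρ P ≤ ε ∧ c = infoCost μ ρ P }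

/-- `IC_ε(f) = max_μ IC^μ_ε(f)`. -/
def IC {X Y : Type} [Fintype X] [Fintype Y] (f : X → Y → Bool) (ε : ℝ) : ℝ :=
  sSup { c : ℝ | ∃ μ : X → Y → ℝ, IsDist2 μ ∧ c = ICmu μ f ε }

/-! ## Rectangles, smooth rectangle bound and partition bound -/

/-- Total weight of rectangles containing `(x, y)`: a combinatorial rectangle is a pair
`R = (S, T)` of finite sets, and `(x,y) ∈ R` iff `x ∈ S ∧ y ∈ T`. -/
def rcov {X Y : Type} [Fintype X] [Fintype Y]
    (w : Finset X × Finset Y → ℝ) (x : X) (y : Y) : ℝ :=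
  ∑ R : Finset X × Finset Y, if x ∈ R.1 ∧ y ∈ R.2 then w R else 0

/-- `μ(R)` for a rectangle `R`. -/
def rMass {X Y : Type} [Fintype X] [Fintype Y]
    (μ : X → Y → ℝ) (R : Finset X × Finset Y) : ℝ :=
  ∑ x, ∑ y, if x ∈ R.1 ∧ y ∈ R.2 then μ x y else 0

/-- `μ_z(R) = μ(R ∩ f⁻¹(z))` for a rectangle `R`. -/
def rMassZ {X Y : Type} [Fintype X] [Fintype Y]
    (μ : X → Y → ℝ) (f : X → Y → Bool) (z : Bool) (R : Finset X × Finset Y) : ℝ :=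
  ∑ x, ∑ y, if (x ∈ R.1 ∧ y ∈ R.2) ∧ f x y = z then μ x y else 0

/-- `μ_z = μ(f⁻¹(z))`. -/
def totalZ {X Y : Type} [Fintype X] [Fintype Y]
    (μ : X → Y → ℝ) (f : X → Y → Bool) (z : Bool) : ℝ :=
  ∑ x, ∑ y, if f x y = z then μ x y else 0

/-- `|μ|`, the total mass of a measure. -/
def totalMass {X Y : Type} [Fintype X] [Fintype Y] (μ : X → Y → ℝ) : ℝ :=
  ∑ x, ∑ y, μ x y

/-- Restriction of a measure to a rectangle. -/
def restrictRect {X Y : Type} (μ : X → Y → ℝ) (R : Finset X × Finset Y) : X → Y → ℝ :=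
  fun x y => if x ∈ R.1 ∧ y ∈ R.2 then μ x y else 0

/-- Distributional smooth rectangle bound `srec^{z,μ}_{ε,δ}(f)` (LP optimal value). -/
def srecZmu {X Y : Type} [Fintype X] [Fintype Y]
    (μ : X → Y → ℝ) (f : X → Y → Bool) (z : Bool) (ε δ : ℝ) : ℝ :=
  sInf { v : ℝ | ∃ w : Finset X × Finset Y → ℝ,
    (∀ R, 0 ≤ w R) ∧
    ((1 - ε) * totalZ μ f z ≤ ∑ x, ∑ y, if f x y = z then μ x y * rcov w x y else 0) ∧
    (∀ x y, f x y ≠ z → rcov w x y ≤ δ) ∧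
    (∀ x y, rcov w x y ≤ 1) ∧
    v = ∑ R : Finset X × Finset Y, w R }

/-- `srec^μ_{ε,δ}(f) = max{srec^{0,μ}_{ε,δ}(f), srec^{1,μ}_{ε,δ}(f)}`. -/
def srecMu {X Y : Type} [Fintype X] [Fintype Y]
    (μ : X → Y → ℝ) (f : X → Y → Bool) (ε δ : ℝ) : ℝ :=
  max (srecZmu μ f false ε δ) (srecZmu μ f true ε δ)

/-- Smooth rectangle bound `srec^z_{ε,δ}(f)` (LP optimal value). -/
def srecZ {X Y : Type} [Fintype X] [Fintype Y]
    (f : X → Y → Bool) (z : Bool) (ε δ : ℝ) : ℝ :=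
  sInf { v : ℝ | ∃ w : Finset X × Finset Y → ℝ,
    (∀ R, 0 ≤ w R) ∧
    (∀ x y, f x y = z → 1 - ε ≤ rcov w x y) ∧
    (∀ x y, f x y ≠ z → rcov w x y ≤ δ) ∧
    (∀ x y, rcov w x y ≤ 1) ∧
    v = ∑ R : Finset X × Finset Y, w R }

/-- `srec_{ε,δ}(f) = max{srec^0_{ε,δ}(f), srec^1_{ε,δ}(f)}`. -/
def srec {X Y : Type} [Fintype X] [Fintype Y] (f : X → Y → Bool) (ε δ : ℝ) : ℝ :=
  max (srecZ f false ε δ) (srecZ f true ε δ)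

/-- Partition bound `prt_ε(f)` (LP optimal value). -/
def prt {X Y : Type} [Fintype X] [Fintype Y] (f : X → Y → Bool) (ε : ℝ) : ℝ :=
  sInf { v : ℝ | ∃ w : Bool → Finset X × Finset Y → ℝ,
    (∀ z R, 0 ≤ w z R) ∧
    (∀ x y, 1 - ε ≤ rcov (w (f x y)) x y) ∧
    (∀ x y, rcov (w false) x y + rcov (w true) x y = 1) ∧
    v = ∑ R : Finset X × Finset Y, (w false R + w true R) }

/-! ### General-output versions -/

/-- Smooth rectangle bound `srec^z_{ε,δ}(f)` for general output alphabet. -/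
def srecZgen {X Y Z : Type} [Fintype X] [Fintype Y]
    (f : X → Y → Z) (z : Z) (ε δ : ℝ) : ℝ :=
  sInf { v : ℝ | ∃ w : Finset X × Finset Y → ℝ,
    (∀ R, 0 ≤ w R) ∧
    (∀ x y, f x y = z → 1 - ε ≤ rcov w x y) ∧
    (∀ x y, f x y ≠ z → rcov w x y ≤ δ) ∧
    (∀ x y, rcov w x y ≤ 1) ∧
    v = ∑ R : Finset X × Finset Y, w R }

/-- `srec_{ε,δ}(f) = max_{z ∈ Z} srec^z_{ε,δ}(f)`. -/
def srecGen {X Y Z : Type} [Fintype X] [Fintype Y] [Fintype Z]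
    (f : X → Y → Z) (ε δ : ℝ) : ℝ :=
  sSup (Set.range fun z : Z => srecZgen f z ε δ)

/-- Distributional smooth rectangle bound for general output alphabet. -/
def srecZmuGen {X Y Z : Type} [Fintype X] [Fintype Y]
    (μ : X → Y → ℝ) (f : X → Y → Z) (z : Z) (ε δ : ℝ) : ℝ :=
  sInf { v : ℝ | ∃ w : Finset X × Finset Y → ℝ,
    (∀ R, 0 ≤ w R) ∧
    ((1 - ε) * (∑ x, ∑ y, if f x y = z then μ x y else 0) ≤
      ∑ x, ∑ y, if f x y = z then μ x y * rcov w x y else 0) ∧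
    (∀ x y, f x y ≠ z → rcov w x y ≤ δ) ∧
    (∀ x y, rcov w x y ≤ 1) ∧
    v = ∑ R : Finset X × Finset Y, w R }

/-- `srec^μ_{ε,δ}(f) = max_{z ∈ Z} srec^{z,μ}_{ε,δ}(f)`. -/
def srecMuGen {X Y Z : Type} [Fintype X] [Fintype Y] [Fintype Z]
    (μ : X → Y → ℝ) (f : X → Y → Z) (ε δ : ℝ) : ℝ :=
  sSup (Set.range fun z : Z => srecZmuGen μ f z ε δ)

/-- Partition bound for general output alphabet. -/
def prtGen {X Y Z : Type} [Fintype X] [Fintype Y] [Fintype Z]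
    (f : X → Y → Z) (ε : ℝ) : ℝ :=
  sInf { v : ℝ | ∃ w : Z → Finset X × Finset Y → ℝ,
    (∀ z R, 0 ≤ w z R) ∧
    (∀ x y, 1 - ε ≤ rcov (w (f x y)) x y) ∧
    (∀ x y, (∑ z : Z, rcov (w z) x y) = 1) ∧
    v = ∑ z : Z, ∑ R : Finset X × Finset Y, w z R }

/-! ## Decision trees, subcubes and the query partition bound -/

/-- Deterministic decision trees on `n` input bits. -/
inductive DTree (n : ℕ) : Type
  | leaf : Bool → DTree n
  | node : Fin n → DTree n → DTree n → DTree n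

def DTree.eval {n : ℕ} : DTree n → (Fin n → Bool) → Bool
  | .leaf b, _ => b
  | .node i t0 t1, x => if x i then DTree.eval t1 x else DTree.eval t0 x

def DTree.depth {n : ℕ} : DTree n → ℕ
  | .leaf _ => 0
  | .node _ t0 t1 => max (DTree.depth t0) (DTree.depth t1) + 1

/-- Error of a decision tree w.r.t. the input distribution `μ`. -/
def qErr {n : ℕ} (μ : (Fin n → Bool) → ℝ) (g : (Fin n → Bool) → Bool) (T : DTree n) : ℝ :=
  ∑ x, if T.eval x ≠ g x then μ x else 0

/-- Distributional query complexity `QC^μ_ε(g)`: minimum depth of a deterministic decision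
tree erring with probability at most `ε` under `μ`. -/
def QCdist {n : ℕ} (μ : (Fin n → Bool) → ℝ) (g : (Fin n → Bool) → Bool) (ε : ℝ) : ℕ :=
  sInf {d : ℕ | ∃ T : DTree n, T.depth ≤ d ∧ qErr μ g T ≤ ε}

/-- A subcube of `{0,1}ⁿ`, given by its support pattern `s ∈ {0,1,⋆}ⁿ`. -/
abbrev Subcube (n : ℕ) := Fin n → Option Bool

/-- Membership in a subcube. -/
def memCube {n : ℕ} (A : Subcube n) (x : Fin n → Bool) : Prop :=
  ∀ i, ∀ b, A i = some b → x i = b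

/-- Size of (the support of) a subcube. -/
def cubeSize {n : ℕ} (A : Subcube n) : ℕ :=
  (Finset.univ.filter fun i => (A i).isSome).card

/-- Total weight of subcubes containing `x`. -/
def cubeCov {n : ℕ} (w : Subcube n → ℝ) (x : Fin n → Bool) : ℝ :=
  ∑ A : Subcube n, if memCube A x then w A else 0

/-- Query partition bound `qprt_ε(g)` (LP optimal value). -/
def qprt {n : ℕ} (g : (Fin n → Bool) → Bool) (ε : ℝ) : ℝ :=
  sInf { v : ℝ | ∃ w : Bool → Subcube n → ℝ,
    (∀ z A, 0 ≤ w z A) ∧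
    (∀ x, 1 - ε ≤ cubeCov (w (g x)) x) ∧
    (∀ x, cubeCov (w false) x + cubeCov (w true) x = 1) ∧
    v = ∑ A : Subcube n, (w false A + w true A) * 2 ^ cubeSize A }

/-- The bit-wise product distribution on `{0,1}ⁿ` with `p_i(1) = p i`, `p_i(0) = 1 - p i`. -/
def bitProd {n : ℕ} (p : Fin n → ℝ) : (Fin n → Bool) → ℝ :=
  fun x => ∏ i, if x i then p i else 1 - p i

/-- `μ(A)` for a subcube (or any set given by a membership predicate). -/
def cubeMass {n : ℕ} (μ : (Fin n → Bool) → ℝ) (A : Subcube n) : ℝ :=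
  ∑ x, if memCube A x then μ x else 0

/-- `μ_z(A) = μ(A ∩ g⁻¹(z))` for a subcube `A`. -/
def cubeMassZ {n : ℕ} (μ : (Fin n → Bool) → ℝ) (g : (Fin n → Bool) → Bool)
    (z : Bool) (A : Subcube n) : ℝ :=
  ∑ x, if memCube A x ∧ g x = z then μ x else 0

/-- `μ_z = μ(g⁻¹(z))`. -/
def qTotalZ {n : ℕ} (μ : (Fin n → Bool) → ℝ) (g : (Fin n → Bool) → Bool) (z : Bool) : ℝ :=
  ∑ x, if g x = z then μ x else 0

/-- Mass of a finite set of pairs under the product measure `μA ⊗ μB`. -/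
def pairMass {X Y : Type} (μA : X → ℝ) (μB : Y → ℝ) (A : Finset (X × Y)) : ℝ :=
  ∑ q ∈ A, μA q.1 * μB q.2

end

/-! Run `2m` independent copies of a solution `w` of the partition LP, `m = ⌈log₂ (1/δ)⌉`, and
give each intersection of `2m` of its rectangles the product of their weights, keeping only the
tuples in which fewer than `m` labels differ from `z`. On every input each copy is correct with
probability at least `7/8`, so the kept tuples cover `f⁻¹(z)` with probability at least
`1 - 4^m 8^{-m} = 1 - 2^{-m} ≥ 1 - δ` and its complement with probability at most `δ`; this is
feasible for `srec^z_{δ,δ}` and has total weight at most `prt^{2m}`. For `δ < 1/2` we have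
`m ≤ 2 log₂ (1/δ)`, whence `C = 4`; for `δ ≥ 1/2` the single rectangle `univ × univ` with weight
`δ` already gives `srec_{δ,δ} ≤ δ < 1`. -/

open Finset

theorem le_map_csInf_of_continuous {α β : Type*} [ConditionallyCompleteLinearOrder α]
    [TopologicalSpace α] [OrderTopology α] [TopologicalSpace β] [Preorder β]
    [OrderClosedTopology β] {S : Set α} {g : α → β} {a : β} (hg : Continuous g)
    (hne : S.Nonempty) (hbdd : BddBelow S) (ha : ∀ v ∈ S, a ≤ g v) : a ≤ g (sInf S) :=
  closure_minimal ha (isClosed_le continuous_const hg) (csInf_mem_closure hne hbdd)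

noncomputable section Rectangles

variable {X Y : Type} [Fintype X] [Fintype Y]

lemma rcov_nonneg {w : Finset X × Finset Y → ℝ} (hw : ∀ R, 0 ≤ w R) (x : X) (y : Y) :
    0 ≤ rcov w x y :=
  sum_nonneg fun R _ => by split_ifs <;> simp [hw R]

lemma rcov_le_sum {w : Finset X × Finset Y → ℝ} (hw : ∀ R, 0 ≤ w R) (x : X) (y : Y) :
    rcov w x y ≤ ∑ R, w R :=
  sum_le_sum fun R _ => by split_ifs <;> simp [hw R]

lemma srecZ_le_sum {f : X → Y → Bool} {z : Bool} {ε δ : ℝ} {u : Finset X × Finset Y → ℝ}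
    (hu : ∀ R, 0 ≤ u R) (hgood : ∀ x y, f x y = z → 1 - ε ≤ rcov u x y)
    (hbad : ∀ x y, f x y ≠ z → rcov u x y ≤ δ) (hle : ∀ x y, rcov u x y ≤ 1) :
    srecZ f z ε δ ≤ ∑ R, u R :=
  csInf_le ⟨0, by rintro _ ⟨u, hu, -, -, -, rfl⟩; exact sum_nonneg fun R _ => hu R⟩
    ⟨u, hu, hgood, hbad, hle, rfl⟩

lemma rcov_sum {ι : Type} (s : Finset ι) (u : ι → Finset X × Finset Y → ℝ) (x : X) (y : Y) :
    rcov (fun R => ∑ j ∈ s, u j R) x y = ∑ j ∈ s, rcov (u j) x y := by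
  unfold rcov
  rw [sum_comm]
  refine sum_congr rfl fun R _ => ?_
  split_ifs <;> simp

lemma rcov_ite_eq (R₀ : Finset X × Finset Y) (a : ℝ) (x : X) (y : Y) :
    rcov (fun R => if R = R₀ then a else 0) x y = if x ∈ R₀.1 ∧ y ∈ R₀.2 then a else 0 := by
  unfold rcov
  rw [sum_eq_single R₀ (fun R _ hR => by simp [hR]) (by simp)]
  simp

def rectInter {ι : Type} (ρ : ι → Finset X × Finset Y) : Finset X × Finset Y :=
  (univ.filter fun a => ∀ i, a ∈ (ρ i).1, univ.filter fun b => ∀ i, b ∈ (ρ i).2)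

def rectProd {ι : Type} [Fintype ι] (u : ι → Finset X × Finset Y → ℝ) :
    Finset X × Finset Y → ℝ :=
  fun R => ∑ ρ : ι → Finset X × Finset Y, if R = rectInter ρ then ∏ i, u i (ρ i) else 0

variable {ι : Type} [Fintype ι]

lemma rectProd_nonneg {u : ι → Finset X × Finset Y → ℝ} (hu : ∀ i R, 0 ≤ u i R)
    (R : Finset X × Finset Y) : 0 ≤ rectProd u R :=
  sum_nonneg fun ρ _ => by split_ifs <;> simp [prod_nonneg fun i _ => hu i (ρ i)]

lemma sum_rectProd (u : ι → Finset X × Finset Y → ℝ) :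
    ∑ R, rectProd u R = ∏ i, ∑ R, u i R := by
  rw [Fintype.prod_sum]
  unfold rectProd
  rw [sum_comm]
  simp

lemma rcov_rectProd (u : ι → Finset X × Finset Y → ℝ) (x : X) (y : Y) :
    rcov (rectProd u) x y = ∏ i, rcov (u i) x y := by
  unfold rectProd
  simp only [rcov_sum, rcov_ite_eq]
  simp only [rcov, Fintype.prod_sum, Fintype.prod_ite_zero]
  simp [rectInter, forall_and]

end Rectangles

section Bernoulli

variable {ι : Type} [Fintype ι]

lemma sum_prod_bool_eq_pow [DecidableEq ι] (c : Bool → ℝ) :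
    ∑ ζ : ι → Bool, ∏ i, c (ζ i) = (c false + c true) ^ Fintype.card ι := by
  rw [← Fintype.prod_sum fun _ b => c b]
  simp [add_comm]

lemma sum_prod_bool_le_of_le_card_ne {c : Bool → ℝ} (hc : ∀ b, 0 ≤ c b) {z : Bool}
    (hz : c z ≤ 1) {q : ℝ} (hq : c (!z) ≤ q) (hq1 : q ≤ 1) {t : ℕ} {G : Finset (ι → Bool)}
    (hG : ∀ ζ ∈ G, t ≤ (univ.filter fun i => ζ i ≠ z).card) :
    ∑ ζ ∈ G, ∏ i, c (ζ i) ≤ 2 ^ Fintype.card ι * q ^ t := by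
  have hterm : ∀ ζ ∈ G, ∏ i, c (ζ i) ≤ q ^ t := fun ζ hζ =>
    calc ∏ i, c (ζ i) ≤ ∏ i, if ζ i = z then 1 else q :=
          prod_le_prod (fun i _ => hc _) fun i _ => by
            split_ifs with h
            · rwa [h]
            · rwa [Bool.eq_not_of_ne h]
      _ = q ^ (univ.filter fun i => ζ i ≠ z).card := by simp [prod_ite]
      _ ≤ q ^ t := pow_le_pow_of_le_one ((hc _).trans hq) hq1 (hG ζ hζ)
  calc ∑ ζ ∈ G, ∏ i, c (ζ i) ≤ G.card • q ^ t := sum_le_card_nsmul _ _ _ hterm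
    _ ≤ 2 ^ Fintype.card ι * q ^ t := by
      rw [nsmul_eq_mul]
      gcongr
      · exact pow_nonneg ((hc _).trans hq) t
      · exact_mod_cast (card_le_univ G).trans_eq (by simp)

lemma sum_prod_bool_le_two_inv_pow {c : Bool → ℝ} (hc : ∀ b, 0 ≤ c b)
    (hsum : c false + c true = 1) {z : Bool} (hz : 7 / 8 ≤ c z) {m : ℕ}
    {G : Finset (Fin (2 * m) → Bool)} (hG : ∀ ζ ∈ G, m ≤ (univ.filter fun i => ζ i ≠ z).card) :
    ∑ ζ ∈ G, ∏ i, c (ζ i) ≤ (2 : ℝ)⁻¹ ^ m := by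
  have hz1 : c z ≤ 1 := by cases z <;> linarith [hc false, hc true]
  have hnz : c (!z) ≤ 8⁻¹ := by cases z <;> simp only [Bool.not_false, Bool.not_true] <;> linarith
  calc ∑ ζ ∈ G, ∏ i, c (ζ i) ≤ 2 ^ Fintype.card (Fin (2 * m)) * (8 : ℝ)⁻¹ ^ m :=
        sum_prod_bool_le_of_le_card_ne hc hz1 hnz (by norm_num) hG
    _ = (2 : ℝ)⁻¹ ^ m := by
      rw [Fintype.card_fin, pow_mul, ← mul_pow]
      norm_num

end Bernoulli

noncomputable section Amplification

variable {X Y : Type} [Fintype X] [Fintype Y]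

def majorityVotes (z : Bool) (m : ℕ) : Finset (Fin (2 * m) → Bool) :=
  univ.filter fun ζ => (univ.filter fun i => ζ i ≠ z).card < m

lemma le_card_ne_of_mem_majorityVotes {z z' : Bool} (hz : z ≠ z') {m : ℕ}
    {ζ : Fin (2 * m) → Bool} (hζ : ζ ∈ majorityVotes z m) :
    m ≤ (univ.filter fun i => ζ i ≠ z').card := by
  have hsplit := card_filter_add_card_filter_not (s := univ) fun i => ζ i = z
  have hsub : (univ.filter fun i => ζ i = z) ⊆ univ.filter fun i => ζ i ≠ z' := by
    intro i
    simp only [mem_filter, mem_univ, true_and]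
    rintro rfl
    exact hz
  simp only [majorityVotes, mem_filter, mem_univ, true_and, ne_eq] at hζ
  simp only [card_univ, Fintype.card_fin] at hsplit
  have := card_le_card hsub
  omega

/-- Each intersection of `2 * m` rectangles of the partition `w` gets the product of their
weights, provided fewer than `m` of their labels differ from `z`. -/
def majorityWeight (w : Bool → Finset X × Finset Y → ℝ) (z : Bool) (m : ℕ) :
    Finset X × Finset Y → ℝ :=
  fun R => ∑ ζ ∈ majorityVotes z m, rectProd (fun i => w (ζ i)) R

variable {w : Bool → Finset X × Finset Y → ℝ}

lemma majorityWeight_nonneg (hw : ∀ b R, 0 ≤ w b R) (z : Bool) (m : ℕ)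
    (R : Finset X × Finset Y) : 0 ≤ majorityWeight w z m R :=
  sum_nonneg fun ζ _ => rectProd_nonneg (fun i => hw (ζ i)) R

lemma rcov_majorityWeight (z : Bool) (m : ℕ) (x : X) (y : Y) :
    rcov (majorityWeight w z m) x y = ∑ ζ ∈ majorityVotes z m, ∏ i, rcov (w (ζ i)) x y := by
  unfold majorityWeight
  simp only [rcov_sum, rcov_rectProd]

lemma sum_majorityWeight_le (hw : ∀ b R, 0 ≤ w b R) (z : Bool) (m : ℕ) :
    ∑ R, majorityWeight w z m R ≤ (∑ R, (w false R + w true R)) ^ (2 * m) := by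
  calc ∑ R, majorityWeight w z m R = ∑ ζ ∈ majorityVotes z m, ∏ i, ∑ R, w (ζ i) R := by
        simp only [majorityWeight]
        exact sum_comm.trans (sum_congr rfl fun ζ _ => sum_rectProd _)
    _ ≤ ∑ ζ : Fin (2 * m) → Bool, ∏ i, ∑ R, w (ζ i) R :=
        sum_le_sum_of_subset_of_nonneg (subset_univ _) fun ζ _ _ =>
          prod_nonneg fun i _ => sum_nonneg fun R _ => hw (ζ i) R
    _ = (∑ R, (w false R + w true R)) ^ (2 * m) := by
        rw [sum_prod_bool_eq_pow fun b => ∑ R, w b R, sum_add_distrib, Fintype.card_fin]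

variable {f : X → Y → Bool}

theorem srecZ_le_pow_of_partition (hw : ∀ b R, 0 ≤ w b R)
    (hcorrect : ∀ x y, 7 / 8 ≤ rcov (w (f x y)) x y)
    (hpart : ∀ x y, rcov (w false) x y + rcov (w true) x y = 1)
    {δ : ℝ} {m : ℕ} (hm : (2 : ℝ)⁻¹ ^ m ≤ δ) (z : Bool) :
    srecZ f z δ δ ≤ (∑ R, (w false R + w true R)) ^ (2 * m) := by
  have hc : ∀ x y b, 0 ≤ rcov (w b) x y := fun x y b => rcov_nonneg (hw b) x y
  have htotal : ∀ x y, ∑ ζ : Fin (2 * m) → Bool, ∏ i, rcov (w (ζ i)) x y = 1 := fun x y => by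
    rw [sum_prod_bool_eq_pow fun b => rcov (w b) x y, hpart, one_pow]
  have htail : ∀ x y (G : Finset (Fin (2 * m) → Bool)),
      (∀ ζ ∈ G, m ≤ (univ.filter fun i => ζ i ≠ f x y).card) →
      ∑ ζ ∈ G, ∏ i, rcov (w (ζ i)) x y ≤ δ := fun x y G hG =>
    (sum_prod_bool_le_two_inv_pow (hc x y) (hpart x y) (hcorrect x y) hG).trans hm
  refine (srecZ_le_sum (majorityWeight_nonneg hw z m) ?_ ?_ ?_).trans
    (sum_majorityWeight_le hw z m) <;> intro x y <;> rw [rcov_majorityWeight]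
  · rintro rfl
    have hsplit := sum_filter_add_sum_filter_not univ
      (fun ζ : Fin (2 * m) → Bool => (univ.filter fun i => ζ i ≠ f x y).card < m)
      (fun ζ => ∏ i, rcov (w (ζ i)) x y)
    have hminority := htail x y
      (univ.filter fun ζ => ¬(univ.filter fun i => ζ i ≠ f x y).card < m)
      fun ζ hζ => by simpa using hζ
    rw [htotal] at hsplit
    rw [majorityVotes]
    linarith
  · intro hz
    exact htail x y _ fun ζ hζ => le_card_ne_of_mem_majorityVotes (Ne.symm hz) hζ
  · exact (sum_le_sum_of_subset_of_nonneg (subset_univ _) fun ζ _ _ =>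
      prod_nonneg fun i _ => hc x y _).trans_eq (htotal x y)

end Amplification

section Bounds

variable {X Y : Type} [Fintype X] [Fintype Y] {f : X → Y → Bool}

lemma srecZ_nonneg (z : Bool) (ε δ : ℝ) : 0 ≤ srecZ f z ε δ :=
  Real.sInf_nonneg <| by rintro _ ⟨u, hu, -, -, -, rfl⟩; exact sum_nonneg fun R _ => hu R

lemma srec_nonneg (ε δ : ℝ) : 0 ≤ srec f ε δ :=
  le_max_of_le_left (srecZ_nonneg _ _ _)

lemma srecZ_le_self (z : Bool) {δ : ℝ} (hδ : 1 / 2 ≤ δ) (hδ1 : δ ≤ 1) : srecZ f z δ δ ≤ δ := by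
  have hcov : ∀ x y,
      rcov (fun R : Finset X × Finset Y => if R = (univ, univ) then δ else 0) x y = δ := by
    simp [rcov_ite_eq]
  simpa using srecZ_le_sum (fun R => by split_ifs <;> linarith)
    (fun x y _ => by rw [hcov]; linarith) (fun x y _ => (hcov x y).le)
    (fun x y => (hcov x y).trans_le hδ1)

lemma srec_le_self {δ : ℝ} (hδ : 1 / 2 ≤ δ) (hδ1 : δ ≤ 1) : srec f δ δ ≤ δ :=
  max_le (srecZ_le_self false hδ hδ1) (srecZ_le_self true hδ hδ1)

lemma exists_exact_partition (f : X → Y → Bool) :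
    ∃ w : Bool → Finset X × Finset Y → ℝ, (∀ b R, 0 ≤ w b R) ∧
      (∀ x y, rcov (w (f x y)) x y = 1) ∧ (∀ x y, rcov (w false) x y + rcov (w true) x y = 1) := by
  let w : Bool → Finset X × Finset Y → ℝ := fun b R =>
    ∑ p : X × Y, if R = ({p.1}, {p.2}) then (if f p.1 p.2 = b then 1 else 0) else 0
  have hcov : ∀ b x y, rcov (w b) x y = if f x y = b then 1 else 0 := by
    intro b x y
    rw [rcov_sum]
    simp [rcov_ite_eq, Fintype.sum_prod_type, ite_and]
  refine ⟨w, fun b R => sum_nonneg fun p _ => by split_ifs <;> norm_num, fun x y => by simp [hcov],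
    fun x y => by rw [hcov, hcov]; cases f x y <;> norm_num⟩

lemma le_prt_pow {ε : ℝ} (hε : 0 ≤ ε) {a : ℝ} {k : ℕ}
    (h : ∀ w : Bool → Finset X × Finset Y → ℝ, (∀ b R, 0 ≤ w b R) →
      (∀ x y, 1 - ε ≤ rcov (w (f x y)) x y) →
      (∀ x y, rcov (w false) x y + rcov (w true) x y = 1) →
      a ≤ (∑ R, (w false R + w true R)) ^ k) :
    a ≤ prt f ε ^ k := by
  obtain ⟨w, hw, hexact, hpart⟩ := exists_exact_partition f
  refine le_map_csInf_of_continuous (continuous_pow k)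
    ⟨_, w, hw, fun x y => by linarith [hexact x y], hpart, rfl⟩ ⟨0, ?_⟩ ?_
  · rintro _ ⟨w, hw, -, -, rfl⟩
    exact sum_nonneg fun R _ => add_nonneg (hw false R) (hw true R)
  · rintro _ ⟨w, hw, hcorrect, hpart, rfl⟩
    exact h w hw hcorrect hpart

lemma one_le_prt [Nonempty X] [Nonempty Y] {ε : ℝ} (hε : 0 ≤ ε) : 1 ≤ prt f ε := by
  obtain ⟨x⟩ := ‹Nonempty X›
  obtain ⟨y⟩ := ‹Nonempty Y›
  simpa using le_prt_pow (k := 1) hε fun w hw _ hpart =>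
    calc 1 = rcov (w false) x y + rcov (w true) x y := (hpart x y).symm
      _ ≤ ∑ R, w false R + ∑ R, w true R :=
        add_le_add (rcov_le_sum (hw false) x y) (rcov_le_sum (hw true) x y)
      _ = (∑ R, (w false R + w true R)) ^ 1 := by rw [pow_one, sum_add_distrib]

lemma srec_le_prt_pow {δ : ℝ} {m : ℕ} (hm : (2 : ℝ)⁻¹ ^ m ≤ δ) :
    srec f δ δ ≤ prt f (1 / 8) ^ (2 * m) := by
  have h : ∀ z, srecZ f z δ δ ≤ prt f (1 / 8) ^ (2 * m) := fun z =>
    le_prt_pow (by norm_num) fun w hw hcorrect hpart =>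
      srecZ_le_pow_of_partition hw (fun x y => by linarith [hcorrect x y]) hpart hm z
  exact max_le (h false) (h true)

lemma logb_srec_le [Nonempty X] [Nonempty Y] {δ : ℝ} {m : ℕ} (hm : (2 : ℝ)⁻¹ ^ m ≤ δ) :
    Real.logb 2 (srec f δ δ) ≤ 2 * m * Real.logb 2 (prt f (1 / 8)) := by
  have hprt := Real.logb_nonneg one_lt_two (one_le_prt (f := f) (ε := 1 / 8) (by norm_num))
  rcases (srec_nonneg (f := f) δ δ).eq_or_lt with h | h
  · rw [← h, Real.logb_zero]
    positivity
  · calc Real.logb 2 (srec f δ δ) ≤ Real.logb 2 (prt f (1 / 8) ^ (2 * m)) :=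
          Real.logb_le_logb_of_le one_lt_two h (srec_le_prt_pow hm)
      _ = 2 * m * Real.logb 2 (prt f (1 / 8)) := by rw [Real.logb_pow]; push_cast; ring

end Bounds

lemma two_inv_pow_ceil_logb_le {δ : ℝ} (hδ : 0 < δ) :
    (2 : ℝ)⁻¹ ^ ⌈Real.logb 2 (1 / δ)⌉₊ ≤ δ := by
  rw [inv_pow, inv_le_comm₀ (by positivity) hδ, ← one_div]
  calc 1 / δ = 2 ^ Real.logb 2 (1 / δ) :=
        (Real.rpow_logb two_pos (by norm_num) (by positivity)).symm
    _ ≤ 2 ^ (⌈Real.logb 2 (1 / δ)⌉₊ : ℝ) :=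
      Real.rpow_le_rpow_of_exponent_le one_le_two (Nat.le_ceil _)
    _ = 2 ^ ⌈Real.logb 2 (1 / δ)⌉₊ := Real.rpow_natCast _ _

/-- **Proposition 2.3, second bound.** There is a universal constant `C > 0` such that for
every `n`, every `f : {0,1}ⁿ × {0,1}ⁿ → {0,1}` and every `δ ∈ (0,1)`,
`log srec_{δ,δ}(f) ≤ C · log(1/δ) · log prt_{1/8}(f)`. -/
theorem log_srec_le_log_prt :
    ∃ C : ℝ, 0 < C ∧
      ∀ (n : ℕ) (f : (Fin n → Bool) → (Fin n → Bool) → Bool) (δ : ℝ),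
        δ ∈ Set.Ioo (0 : ℝ) 1 →
        Real.logb 2 (srec f δ δ) ≤
          C * Real.logb 2 (1 / δ) * Real.logb 2 (prt f (1/8)) := by
  refine ⟨4, by norm_num, fun n f δ ⟨hδ0, hδ1⟩ => ?_⟩
  have hprt := Real.logb_nonneg one_lt_two (one_le_prt (f := f) (ε := 1 / 8) (by norm_num))
  rcases le_or_gt (1 / 2) δ with hδ | hδ
  · have hsrec : Real.logb 2 (srec f δ δ) ≤ 0 :=
      Real.logb_nonpos one_lt_two (srec_nonneg δ δ) ((srec_le_self hδ hδ1.le).trans hδ1.le)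
    have hδinv : 0 ≤ Real.logb 2 (1 / δ) :=
      Real.logb_nonneg one_lt_two (by rw [le_div_iff₀ hδ0]; linarith)
    nlinarith
  · set t := Real.logb 2 (1 / δ)
    have ht : 1 ≤ t := by
      rw [Real.le_logb_iff_rpow_le one_lt_two (by positivity), Real.rpow_one, le_div_iff₀ hδ0]
      linarith
    have hceil : (⌈t⌉₊ : ℝ) ≤ 2 * t := by linarith [Nat.ceil_lt_add_one (zero_le_one.trans ht)]
    calc Real.logb 2 (srec f δ δ) ≤ 2 * ⌈t⌉₊ * Real.logb 2 (prt f (1 / 8)) :=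
          logb_srec_le (two_inv_pow_ceil_logb_le hδ0)
      _ ≤ 4 * t * Real.logb 2 (prt f (1 / 8)) :=
          mul_le_mul_of_nonneg_right (by linarith) hprt
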